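/- arXiv:1912.07967 — 2 statements merged into one kernel-verified Lean document; each statement's English description precedes it below -/
import Mathlib

section
/- Let n and r be integers with 2 ≤ r ≤ n, let 0 < x_1 < x_2 < ⋯ < x_r be real numbers, and let w_1, …, w_r be strictly positive real numbers. Then there exists a unique β > 0 satisfying 1/β = (∑_{j=1}^r w_j (log x_j) x_j^β) / (∑_{j=1}^r w_j x_j^β) − (1/r)∑_{j=1}^r log x_j. -/
open Real

open Finset Filter

theorem weib_chebyshev {ι : Type*} [Fintype ι] (p u v : ι → ℝ) (hp : ∀ i, 0 ≤ p i)
    (h : ∀ i j, 0 ≤ (u i - u j) * (v i - v j)) :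
    (∑ i, p i * u i) * (∑ i, p i * v i) ≤ (∑ i, p i) * (∑ i, p i * (u i * v i)) := by
  have key : (0:ℝ) ≤ ∑ i, ∑ j, p i * p j * ((u i - u j) * (v i - v j)) :=
    Finset.sum_nonneg fun i _ => Finset.sum_nonneg fun j _ =>
      mul_nonneg (mul_nonneg (hp i) (hp j)) (h i j)
  have h1 : ∑ i : ι, ∑ j : ι, p i * p j * (u i * v i)
      = (∑ i, p i * (u i * v i)) * ∑ j, p j := by
    rw [Finset.sum_mul_sum]
    exact Finset.sum_congr rfl fun i _ => Finset.sum_congr rfl fun j _ => by ring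
  have h2 : ∑ i : ι, ∑ j : ι, p i * p j * (u j * v j)
      = (∑ i, p i) * ∑ j, p j * (u j * v j) := by
    rw [Finset.sum_mul_sum]
    exact Finset.sum_congr rfl fun i _ => Finset.sum_congr rfl fun j _ => by ring
  have h3 : ∑ i : ι, ∑ j : ι, p i * p j * (u i * v j)
      = (∑ i, p i * u i) * ∑ j, p j * v j := by
    rw [Finset.sum_mul_sum]
    exact Finset.sum_congr rfl fun i _ => Finset.sum_congr rfl fun j _ => by ring
  have h4 : ∑ i : ι, ∑ j : ι, p i * p j * (u j * v i)
      = (∑ i, p i * v i) * ∑ j, p j * u j := by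
    rw [Finset.sum_mul_sum]
    exact Finset.sum_congr rfl fun i _ => Finset.sum_congr rfl fun j _ => by ring
  have expand : ∀ i j : ι, p i * p j * ((u i - u j) * (v i - v j))
      = p i * p j * (u i * v i) + p i * p j * (u j * v j)
        - p i * p j * (u i * v j) - p i * p j * (u j * v i) := fun i j => by ring
  simp_rw [expand, Finset.sum_sub_distrib, Finset.sum_add_distrib] at key
  rw [h1, h2, h3, h4] at key
  nlinarith [key]

theorem weib_main {r : ℕ} (hr : 2 ≤ r) (L w : Fin r → ℝ) (hL : StrictMono L)
    (hw : ∀ j, 0 < w j) :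
    ∃! β : ℝ, 0 < β ∧
      1 / β = (∑ j, w j * L j * Real.exp (β * L j)) / (∑ j, w j * Real.exp (β * L j)) -
        (1 / (r : ℝ)) * ∑ j, L j := by
  haveI : NeZero r := ⟨by omega⟩
  set c : ℝ := (1 / (r : ℝ)) * ∑ j, L j with hc
  set N : ℝ → ℝ := fun β => ∑ j, w j * L j * Real.exp (β * L j) with hN
  set S : ℝ → ℝ := fun β => ∑ j, w j * Real.exp (β * L j) with hS
  have hSpos : ∀ β, 0 < S β := fun β =>
    Finset.sum_pos (fun j _ => mul_pos (hw j) (Real.exp_pos _)) univ_nonempty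
  set t : Fin r := ⟨r - 1, by omega⟩ with ht
  have hjle : ∀ j : Fin r, L j ≤ L t := fun j =>
    hL.monotone (Fin.le_def.mpr (by have := j.isLt; simp [ht]; omega))
  set M : ℝ := L t with hM
  -- c < M
  have hr0 : (0:ℝ) < (r:ℝ) := by exact_mod_cast (by omega : 0 < r)
  have hsumlt : ∑ j, L j < (r:ℝ) * M := by
    have hz : (⟨0, by omega⟩ : Fin r) < t := Fin.lt_def.mpr (by simp [ht]; omega)
    have := Finset.sum_lt_sum (fun j (_ : j ∈ univ) => hjle j)
      ⟨⟨0, by omega⟩, Finset.mem_univ _, hL hz⟩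
    simpa [Finset.sum_const, Finset.card_univ, nsmul_eq_mul] using this
  have hcM : c < M := by
    have : c < (1/(r:ℝ)) * ((r:ℝ) * M) :=
      mul_lt_mul_of_pos_left hsumlt (by positivity)
    calc c < (1/(r:ℝ)) * ((r:ℝ) * M) := this
      _ = M := by field_simp
  -- N β ≤ M * S β
  have hNle : ∀ β, N β ≤ M * S β := by
    intro β
    rw [hS, Finset.mul_sum]
    apply Finset.sum_le_sum
    intro j _
    have h1 := hjle j
    have h2 := (Real.exp_pos (β * L j)).le
    have h3 := (hw j).le
    calc w j * L j * Real.exp (β * L j) = L j * (w j * Real.exp (β * L j)) := by ring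
      _ ≤ M * (w j * Real.exp (β * L j)) :=
        mul_le_mul_of_nonneg_right h1 (mul_nonneg h3 h2)
  have hRle : ∀ β, N β / S β ≤ M := fun β => (div_le_iff₀ (hSpos β)).mpr (hNle β)
  -- monotonicity of N/S
  have hmono : ∀ β₁ β₂ : ℝ, β₁ ≤ β₂ → N β₁ / S β₁ ≤ N β₂ / S β₂ := by
    intro β₁ β₂ h12
    rw [div_le_div_iff₀ (hSpos β₁) (hSpos β₂)]
    have key := weib_chebyshev (fun j => w j * Real.exp (β₁ * L j)) L
      (fun j => Real.exp ((β₂ - β₁) * L j))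
      (fun j => (mul_pos (hw j) (Real.exp_pos _)).le)
      (fun i j => by
        rcases le_total (L i) (L j) with hij | hij
        · have h1 : (β₂ - β₁) * L i ≤ (β₂ - β₁) * L j :=
            mul_le_mul_of_nonneg_left hij (by linarith)
          have h2 := Real.exp_le_exp.mpr h1
          nlinarith
        · have h1 : (β₂ - β₁) * L j ≤ (β₂ - β₁) * L i :=
            mul_le_mul_of_nonneg_left hij (by linarith)
          have h2 := Real.exp_le_exp.mpr h1
          nlinarith)
    have e1 : ∑ j, (w j * Real.exp (β₁ * L j)) * L j = N β₁ :=
      Finset.sum_congr rfl fun j _ => by ring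
    have e2 : ∑ j, (w j * Real.exp (β₁ * L j)) * Real.exp ((β₂ - β₁) * L j) = S β₂ :=
      Finset.sum_congr rfl fun j _ => by
        rw [mul_assoc, ← Real.exp_add,
          show β₁ * L j + (β₂ - β₁) * L j = β₂ * L j from by ring]
    have e3 : ∑ j, (w j * Real.exp (β₁ * L j)) = S β₁ := rfl
    have e4 : ∑ j, (w j * Real.exp (β₁ * L j)) * (L j * Real.exp ((β₂ - β₁) * L j))
        = N β₂ :=
      Finset.sum_congr rfl fun j _ => by
        rw [show (w j * Real.exp (β₁ * L j)) * (L j * Real.exp ((β₂ - β₁) * L j))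
            = w j * L j * (Real.exp (β₁ * L j) * Real.exp ((β₂ - β₁) * L j)) from by ring,
          ← Real.exp_add, show β₁ * L j + (β₂ - β₁) * L j = β₂ * L j from by ring]
    rw [e1, e2, e3, e4] at key
    linarith
  -- lower point
  set a : ℝ := (M - c + 1)⁻¹ with ha'
  have ha : 0 < a := inv_pos.mpr (by linarith)
  have hFa : N a / S a - c - 1 / a < 0 := by
    have h1 : 1 / a = M - c + 1 := by rw [one_div, inv_inv]
    have := hRle a
    linarith
  -- tendsto at top
  have hNSshift : ∀ β : ℝ, N β / S β
      = (∑ j, w j * L j * Real.exp (β * (L j - M)))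
        / (∑ j, w j * Real.exp (β * (L j - M))) := by
    intro β
    have hnum : ∑ j, w j * L j * Real.exp (β * (L j - M)) = N β * Real.exp (-(β * M)) := by
      rw [hN]
      simp only [Finset.sum_mul]
      exact Finset.sum_congr rfl fun j _ => by
        rw [show β * (L j - M) = β * L j + -(β * M) from by ring, Real.exp_add]; ring
    have hden : ∑ j, w j * Real.exp (β * (L j - M)) = S β * Real.exp (-(β * M)) := by
      rw [hS]
      simp only [Finset.sum_mul]
      exact Finset.sum_congr rfl fun j _ => by
        rw [show β * (L j - M) = β * L j + -(β * M) from by ring, Real.exp_add]; ring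
    rw [hnum, hden, mul_div_mul_right _ _ (Real.exp_ne_zero _)]
  have hterm : ∀ (f : Fin r → ℝ) (j : Fin r), Filter.Tendsto
      (fun β => f j * Real.exp (β * (L j - M))) Filter.atTop
      (nhds (if j = t then f t else 0)) := by
    intro f j
    by_cases hj : j = t
    · subst hj
      simp only [hM, sub_self, mul_zero, Real.exp_zero, mul_one, if_pos rfl]
      exact tendsto_const_nhds
    · have hlt : L j - M < 0 := sub_neg.mpr
        (lt_of_le_of_ne (hjle j) (fun h => hj (hL.injective h)))
      have h1 : Filter.Tendsto (fun β : ℝ => β * (L j - M)) atTop atBot :=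
        (tendsto_mul_const_atBot_of_neg hlt).mpr tendsto_id
      have h2 := Real.tendsto_exp_atBot.comp h1
      have h3 := h2.const_mul (f j)
      simpa [hj] using h3
  have hnum_t : Filter.Tendsto (fun β => ∑ j, w j * L j * Real.exp (β * (L j - M)))
      atTop (nhds (w t * L t)) := by
    have h0 := tendsto_finset_sum Finset.univ
      (fun j (_ : j ∈ univ) => hterm (fun j => w j * L j) j)
    have hsum : (∑ j : Fin r, if j = t then w t * L t else 0) = w t * L t := by
      rw [Finset.sum_ite_eq' univ t fun _ => w t * L t]; simp
    rwa [hsum] at h0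
  have hden_t : Filter.Tendsto (fun β => ∑ j, w j * Real.exp (β * (L j - M)))
      atTop (nhds (w t)) := by
    have h0 := tendsto_finset_sum Finset.univ (fun j (_ : j ∈ univ) => hterm w j)
    have hsum : (∑ j : Fin r, if j = t then w t else 0) = w t := by
      rw [Finset.sum_ite_eq' univ t fun _ => w t]; simp
    rwa [hsum] at h0
  have hdiv : Filter.Tendsto (fun β => N β / S β) atTop (nhds M) := by
    have h0 := hnum_t.div hden_t (ne_of_gt (hw t))
    have heq : w t * L t / w t = M := by
      rw [hM, mul_comm, mul_div_assoc, div_self (ne_of_gt (hw t)), mul_one]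
    rw [heq] at h0
    exact h0.congr (fun β => (hNSshift β).symm)
  have hFt : Filter.Tendsto (fun β => N β / S β - c - 1 / β) atTop (nhds (M - c - 0)) := by
    exact (hdiv.sub tendsto_const_nhds).sub
      ((tendsto_inv_atTop_zero (𝕜 := ℝ)).congr fun y => (one_div y).symm)
  obtain ⟨b, hb1, hb2⟩ := ((eventually_gt_atTop a).and
    (hFt.eventually_const_lt (by linarith : (0:ℝ) < M - c - 0))).exists
  -- continuity
  have hNcont : Continuous N :=
    continuous_finset_sum _ fun j _ =>
      continuous_const.mul (Real.continuous_exp.comp (continuous_id.mul continuous_const))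
  have hScont : Continuous S :=
    continuous_finset_sum _ fun j _ =>
      continuous_const.mul (Real.continuous_exp.comp (continuous_id.mul continuous_const))
  have hFcont : ContinuousOn (fun β => N β / S β - c - 1 / β) (Set.Icc a b) := by
    intro β hβ
    have hβ0 : β ≠ 0 := ne_of_gt (lt_of_lt_of_le ha hβ.1)
    exact ContinuousAt.continuousWithinAt
      (((hNcont.continuousAt.div hScont.continuousAt (ne_of_gt (hSpos β))).sub
        continuousAt_const).sub (continuousAt_const.div continuousAt_id hβ0))
  obtain ⟨β, hβmem, hβeq⟩ := intermediate_value_Icc hb1.le hFcont ⟨hFa.le, hb2.le⟩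
  have hβpos : 0 < β := lt_of_lt_of_le ha hβmem.1
  refine ⟨β, ⟨hβpos, by have := hβeq; dsimp only at this; linarith⟩, ?_⟩
  rintro γ ⟨hγpos, hγeq⟩
  have hβeq' : 1 / β = N β / S β - c := by
    have := hβeq; dsimp only at this; linarith
  by_contra hne
  rcases lt_or_gt_of_ne hne with h | h
  · have h1 : 1 / β < 1 / γ := one_div_lt_one_div_of_lt hγpos h
    have h2 := hmono γ β h.le
    rw [hβeq', hγeq] at h1
    linarith
  · have h1 : 1 / γ < 1 / β := one_div_lt_one_div_of_lt hβpos h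
    have h2 := hmono β γ h.le
    rw [hβeq', hγeq] at h1
    linarith


/-- Uniqueness of the maximum likelihood estimate of the Weibull shape parameter based
on sequential order statistics: for observations `0 < x_1 < ⋯ < x_r` and positive
weights `w_j`, the likelihood equation
`1/β = (∑ w_j (log x_j) x_j^β)/(∑ w_j x_j^β) − (1/r)∑ log x_j`
has a unique solution `β > 0`. -/
theorem weibull_mle_shape_existsUnique
    (n r : ℕ) (hr : 2 ≤ r) (hrn : r ≤ n)
    (x w : Fin r → ℝ) (hx0 : ∀ j, 0 < x j) (hx : StrictMono x) (hw : ∀ j, 0 < w j) :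
    ∃! β : ℝ, 0 < β ∧
      1 / β = (∑ j, w j * Real.log (x j) * x j ^ β) / (∑ j, w j * x j ^ β) -
        (1 / (r : ℝ)) * ∑ j, Real.log (x j) := by
  have hL : StrictMono (fun j => Real.log (x j)) := fun a b hab =>
    Real.log_lt_log (hx0 a) (hx hab)
  have key := weib_main hr (fun j => Real.log (x j)) w hL hw
  have hrw : ∀ β : ℝ, ∀ j : Fin r, x j ^ β = Real.exp (β * Real.log (x j)) := fun β j => by
    rw [Real.rpow_def_of_pos (hx0 j), mul_comm]
  refine (existsUnique_congr fun β => and_congr_right fun _ => ?_).mpr key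
  simp only [hrw β]
end

section
/- Let n ≥ 2 and let x_1, …, x_n be strictly positive real numbers that are not all equal. Then there exists a unique β > 0 satisfying 1/β + (1/n)∑_{j=1}^n log x_j = (∑_{j=1}^n (log x_j) x_j^β) / (∑_{j=1}^n x_j^β). -/
open Real

lemma weibull_aux_term_lb (t : ℝ) : -1 ≤ (t - 1) * Real.exp t := by
  have h1 : (-t) + 1 ≤ Real.exp (-t) := Real.add_one_le_exp (-t)
  have h2 : Real.exp (-t) * Real.exp t = 1 := by
    rw [← Real.exp_add]; norm_num
  nlinarith [Real.exp_pos t]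

/-- Uniqueness of the maximum likelihood estimate of the Weibull shape parameter for
a complete iid sample: if `x_1, …, x_n > 0` are not all equal, the likelihood
equation `1/β + (1/n)∑ log x_j = (∑ (log x_j) x_j^β)/(∑ x_j^β)` has a unique
solution `β > 0`. -/
theorem weibull_mle_shape_complete_sample_existsUnique
    (n : ℕ) (hn : 2 ≤ n) (x : Fin n → ℝ) (hx0 : ∀ j, 0 < x j)
    (hx : ¬ ∀ i j, x i = x j) :
    ∃! β : ℝ, 0 < β ∧
      1 / β + (1 / (n : ℝ)) * ∑ j, Real.log (x j) =
        (∑ j, Real.log (x j) * x j ^ β) / (∑ j, x j ^ β) := by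
  have hn0 : (0:ℝ) < n := by positivity
  have hnne : (n:ℝ) ≠ 0 := hn0.ne'
  set L : ℝ := (1 / (n : ℝ)) * ∑ j, Real.log (x j) with hLdef
  set y : Fin n → ℝ := fun j => Real.log (x j) - L with hydef
  set G : ℝ → ℝ := fun β => ∑ j, (β * y j - 1) * Real.exp (β * y j) with hGdef
  -- sum of y is zero
  have hsumy : ∑ j, y j = 0 := by
    simp only [hydef, Finset.sum_sub_distrib, Finset.sum_const, Finset.card_univ,
      Fintype.card_fin, nsmul_eq_mul, hLdef]
    field_simp
    ring
  -- some y_k is nonzero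
  have hexy : ∃ k, y k ≠ 0 := by
    by_contra h
    push_neg at h
    apply hx
    intro i j
    have hi : Real.log (x i) = L := by have := h i; simp [hydef] at this; linarith
    have hj : Real.log (x j) = L := by have := h j; simp [hydef] at this; linarith
    have : Real.exp (Real.log (x i)) = Real.exp (Real.log (x j)) := by rw [hi, hj]
    rwa [Real.exp_log (hx0 i), Real.exp_log (hx0 j)] at this
  -- some y_k is positive
  have hexpos : ∃ k, 0 < y k := by
    by_contra h
    push_neg at h
    obtain ⟨k0, hk0⟩ := hexy
    have hlt : ∑ j, y j < ∑ j : Fin n, (0:ℝ) := by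
      refine Finset.sum_lt_sum (fun i _ => h i) ⟨k0, Finset.mem_univ k0, ?_⟩
      exact lt_of_le_of_ne (h k0) hk0
    simp [hsumy] at hlt
  -- derivative of G
  have hderiv : ∀ β : ℝ, HasDerivAt G (∑ j, β * (y j)^2 * Real.exp (β * y j)) β := by
    intro β
    apply HasDerivAt.fun_sum
    intro j _
    have h1 : HasDerivAt (fun b : ℝ => b * y j) (y j) β := by
      simpa using (hasDerivAt_id β).mul_const (y j)
    have h2 : HasDerivAt (fun b : ℝ => b * y j - 1) (y j) β := h1.sub_const 1
    have h3 : HasDerivAt (fun b : ℝ => Real.exp (b * y j))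
        (Real.exp (β * y j) * y j) β := by
      have := (Real.hasDerivAt_exp (β * y j)).comp β h1; exact this
    have := h2.fun_mul h3
    convert this using 1
    · rfl
    ring
  have hdiff : Differentiable ℝ G := fun β => (hderiv β).differentiableAt
  -- strict monotonicity on [0, ∞)
  have hmono : StrictMonoOn G (Set.Ici 0) := by
    apply strictMonoOn_of_deriv_pos (convex_Ici 0) hdiff.continuous.continuousOn
    intro β hβ
    rw [interior_Ici] at hβ
    have hβ' : 0 < β := hβ
    rw [(hderiv β).deriv]
    obtain ⟨k, hk⟩ := hexy
    refine Finset.sum_pos' (fun i _ => ?_) ⟨k, Finset.mem_univ k, ?_⟩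
    · exact mul_nonneg (mul_nonneg hβ'.le (sq_nonneg _)) (Real.exp_pos _).le
    · have h2 : 0 < y k ^ 2 := by rcases lt_or_gt_of_ne hk with h | h <;> nlinarith
      exact mul_pos (mul_pos hβ' h2) (Real.exp_pos _)
  -- G 0 = -n
  have hG0 : G 0 = -n := by
    simp [hGdef]
  -- find B with G B > 0
  obtain ⟨k, hk⟩ := hexpos
  set B : ℝ := ((n:ℝ) + 1) / y k with hBdef
  have hB0 : 0 < B := by positivity
  have hGB : 0 < G B := by
    have hBy : B * y k = (n:ℝ) + 1 := by
      rw [hBdef]; field_simp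
    have hterm : (n:ℝ) ≤ (B * y k - 1) * Real.exp (B * y k) := by
      rw [hBy]
      have h1 : (1:ℝ) ≤ Real.exp ((n:ℝ) + 1) := by
        rw [show (1:ℝ) = Real.exp 0 by simp]
        exact Real.exp_le_exp.mpr (by positivity)
      nlinarith
    have hsplit : G B = (B * y k - 1) * Real.exp (B * y k) +
        ∑ j ∈ Finset.univ.erase k, (B * y j - 1) * Real.exp (B * y j) := by
      rw [hGdef]
      exact (Finset.add_sum_erase _ _ (Finset.mem_univ k)).symm
    have hrest : -((n:ℝ) - 1) ≤ ∑ j ∈ Finset.univ.erase k, (B * y j - 1) * Real.exp (B * y j) := by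
      have hcard : (Finset.univ.erase k).card = n - 1 := by
        rw [Finset.card_erase_of_mem (Finset.mem_univ k)]
        simp
      calc -((n:ℝ) - 1) = ∑ _j ∈ Finset.univ.erase k, (-1 : ℝ) := by
            rw [Finset.sum_const, hcard, nsmul_eq_mul]
            have : ((n - 1 : ℕ) : ℝ) = (n:ℝ) - 1 := by
              have : 1 ≤ n := by omega
              push_cast [this]; ring
            rw [this]; ring
        _ ≤ _ := Finset.sum_le_sum fun j _ => weibull_aux_term_lb (B * y j)
    have : (0:ℝ) < (n:ℝ) + -((n:ℝ) - 1) := by ring_nf; norm_num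
    calc (0:ℝ) < (n:ℝ) + -((n:ℝ)-1) := this
      _ ≤ _ := by rw [hsplit]; exact add_le_add hterm hrest
  -- existence of root via IVT
  have hivt : (0:ℝ) ∈ Set.Icc (G 0) (G B) := by
    constructor
    · rw [hG0]; linarith
    · exact hGB.le
  obtain ⟨c, hcmem, hGc⟩ := intermediate_value_Icc hB0.le hdiff.continuous.continuousOn hivt
  have hcpos : 0 < c := by
    rcases lt_or_eq_of_le hcmem.1 with h | h
    · exact h
    · exfalso
      rw [← h] at hGc
      rw [hG0] at hGc
      have : (2:ℝ) ≤ (n:ℝ) := by exact_mod_cast hn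
      linarith
  -- equivalence of equation with G β = 0
  have heq : ∀ β : ℝ, 0 < β →
      ((1 / β + L = (∑ j, Real.log (x j) * x j ^ β) / (∑ j, x j ^ β)) ↔ G β = 0) := by
    intro β hβ
    have hS0 : 0 < ∑ j, x j ^ β := by
      haveI : Nonempty (Fin n) := Fin.pos_iff_nonempty.mp (by omega)
      exact Finset.sum_pos (fun j _ => Real.rpow_pos_of_pos (hx0 j) β) Finset.univ_nonempty
    have hGrepr : G β = (-β * Real.exp (-(β * L))) *
        ((1 / β + L) * ∑ j, x j ^ β - ∑ j, Real.log (x j) * x j ^ β) := by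
      rw [hGdef]
      simp only [Finset.mul_sum, mul_sub, ← Finset.sum_sub_distrib]
      refine Finset.sum_congr rfl fun j _ => ?_
      rw [Real.rpow_def_of_pos (hx0 j)]
      have hexp : Real.exp (β * y j) = Real.exp (Real.log (x j) * β) * Real.exp (-(β * L)) := by
        rw [← Real.exp_add, hydef]; ring_nf
      rw [hexp]
      field_simp
      ring
    constructor
    · intro h
      rw [eq_div_iff hS0.ne'] at h
      rw [hGrepr, h]
      simp
    · intro h
      rw [hGrepr] at h
      rcases mul_eq_zero.mp h with h' | h'
      · exfalso
        rcases mul_eq_zero.mp h' with h'' | h''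
        · exact hβ.ne' (by linarith [neg_eq_zero.mp h''])
        · exact (Real.exp_pos _).ne' h''
      · rw [eq_div_iff hS0.ne']
        linarith [sub_eq_zero.mp h']
  -- assemble
  refine ⟨c, ⟨hcpos, (heq c hcpos).mpr hGc⟩, ?_⟩
  rintro b ⟨hb, hbeq⟩
  have hGb : G b = 0 := (heq b hb).mp hbeq
  exact hmono.injOn (Set.mem_Ici.mpr hb.le) (Set.mem_Ici.mpr hcpos.le) (by rw [hGb, hGc])
end
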